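/- arXiv:0905.2283 — 2 statements merged into one kernel-verified Lean document; each statement's English description precedes it below -/
import Mathlib

section
/- Let K be a weakly distributive k-algebra with conjugation whose trace and norm are k-valued. Then the conjugation respects squares: (a²)‾ = (ā)² for all a ∈ K. -/
/-- A `k`-algebra with conjugation: a left `k`-vector space `K` with a
(not necessarily distributive or associative) multiplication and identity,
where `k` sits centrally (encoded via scalar compatibility), together with a
self-inverse `k`-linear conjugation fixing `k`. -/
structure ConjAlg (k : Type*) [Field k] (K : Type*) [AddCommGroup K] [Module k K] where
  mul : K → K → K
  one : K
  one_mul : ∀ x, mul one x = x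
  mul_one : ∀ x, mul x one = x
  smul_mul : ∀ (c : k) (x y : K), mul (c • x) y = c • mul x y
  mul_smul : ∀ (c : k) (x y : K), mul x (c • y) = c • mul x y
  conj : K →ₗ[k] K
  conj_conj : ∀ x, conj (conj x) = x
  conj_one : conj one = one

namespace ConjAlg

variable {k : Type*} [Field k] {K : Type*} [AddCommGroup K] [Module k K]

/-- The norm `n(a) = ā a`. -/
def n (A : ConjAlg k K) (x : K) : K := A.mul (A.conj x) x

/-- The trace `t(a) = a + ā`. -/
def t (A : ConjAlg k K) (x : K) : K := x + A.conj x

/-- Membership in (the copy of) `k` inside `K`. -/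
def InK (A : ConjAlg k K) (x : K) : Prop := ∃ c : k, x = c • A.one

/-- Weak right distributivity: `(a+b)c = ac + bc` whenever `a ∈ k`. -/
def WeakRightDistrib (A : ConjAlg k K) : Prop :=
  ∀ (c : k) (b y : K), A.mul (c • A.one + b) y = A.mul (c • A.one) y + A.mul b y

/-- Weak left distributivity: `c(a+b) = ca + cb` whenever `a ∈ k`. -/
def WeakLeftDistrib (A : ConjAlg k K) : Prop :=
  ∀ (c : k) (b y : K), A.mul y (c • A.one + b) = A.mul y (c • A.one) + A.mul y b

/-- Full left distributivity. -/
def LeftDistrib (A : ConjAlg k K) : Prop :=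
  ∀ x y z : K, A.mul x (y + z) = A.mul x y + A.mul x z

/-- Full right distributivity. -/
def RightDistrib (A : ConjAlg k K) : Prop :=
  ∀ x y z : K, A.mul (x + y) z = A.mul x z + A.mul y z

/-- Left alternativity: `a(ab) = a²b`. -/
def LeftAlt (A : ConjAlg k K) : Prop :=
  ∀ a b : K, A.mul a (A.mul a b) = A.mul (A.mul a a) b

/-- The trace is `k`-valued. -/
def TraceKValued (A : ConjAlg k K) : Prop := ∀ x : K, A.InK (A.t x)

/-- The norm is `k`-valued. -/
def NormKValued (A : ConjAlg k K) : Prop := ∀ x : K, A.InK (A.n x)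

/-- The norm is anisotropic. -/
def Anisotropic (A : ConjAlg k K) : Prop := ∀ x : K, x ≠ 0 → A.n x ≠ 0

/-- The norm is symmetric: `n(ā) = n(a)`. -/
def NormSymmetric (A : ConjAlg k K) : Prop := ∀ x : K, A.n (A.conj x) = A.n x

end ConjAlg

/-! Writing `t(a) = c ∈ k`, we have `ā = c - a` and `a = c - ā`, so weak distributivity gives
`a² = c a - a ā` and `ā² = c ā - a ā`. Since `a ā = n(ā)` is a scalar, fixed by conjugation,
conjugating the first identity yields the second. -/

namespace ConjAlg

variable {k : Type*} [Field k] {K : Type*} [AddCommGroup K] [Module k K] (A : ConjAlg k K)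

theorem mul_neg (x y : K) : A.mul x (-y) = -A.mul x y := by
  rw [← neg_one_smul k y, A.mul_smul, neg_one_smul]

theorem neg_mul (x y : K) : A.mul (-x) y = -A.mul x y := by
  rw [← neg_one_smul k x, A.smul_mul, neg_one_smul]

theorem mul_smul_one_sub (hwl : A.WeakLeftDistrib) (c : k) (x y : K) :
    A.mul y (c • A.one - x) = c • y - A.mul y x := by
  rw [sub_eq_add_neg, hwl, A.mul_smul, A.mul_one, mul_neg, ← sub_eq_add_neg]

theorem smul_one_sub_mul (hwr : A.WeakRightDistrib) (c : k) (x y : K) :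
    A.mul (c • A.one - x) y = c • y - A.mul x y := by
  rw [sub_eq_add_neg, hwr, A.smul_mul, A.one_mul, neg_mul, ← sub_eq_add_neg]

theorem conj_eq_smul_one_sub {c : k} {a : K} (hc : A.t a = c • A.one) :
    A.conj a = c • A.one - a := by
  rw [← hc, t]
  abel

theorem n_conj (a : K) : A.n (A.conj a) = A.mul a (A.conj a) := by
  rw [n, A.conj_conj]

end ConjAlg

theorem stmt5 {k : Type*} [Field k] {K : Type*} [AddCommGroup K] [Module k K] (A : ConjAlg k K)
    (hwr : A.WeakRightDistrib) (hwl : A.WeakLeftDistrib)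
    (ht : A.TraceKValued) (hn : A.NormKValued) :
    ∀ a : K, A.conj (A.mul a a) = A.mul (A.conj a) (A.conj a) := by
  intro a
  obtain ⟨c, hc⟩ := ht a
  obtain ⟨d, hd⟩ := hn (A.conj a)
  have hconj : A.conj a = c • A.one - a := A.conj_eq_smul_one_sub hc
  have ha : a = c • A.one - A.conj a := by rw [hconj, sub_sub_cancel]
  have hmul_conj : A.mul a (A.conj a) = d • A.one := by rw [← A.n_conj, hd]
  have hsq : A.mul a a = c • a - d • A.one := by
    rw [← hmul_conj, ← A.mul_smul_one_sub hwl, ← ha]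
  have hsq_conj : A.mul (A.conj a) (A.conj a) = c • A.conj a - d • A.one := by
    rw [← hmul_conj, ← A.smul_one_sub_mul hwr, ← hconj]
  rw [hsq, hsq_conj, map_sub, map_smul, map_smul, A.conj_one]
end

section
/- Let K be a weakly distributive left alternative k-algebra with conjugation, with k-valued trace, anisotropic k-valued norm, and containing a nonzero imaginary element. Then a ∈ K satisfies n(a) = 1 if and only if there exists a nonzero b ∈ K with b̄ a = b. -/
/-!
If `n(a) = 1` then `b = 1 + a` works, since `(1 + ā) a = a + 1`; when `1 + a = 0` a nonzero
imaginary `b` works instead. Conversely, put `c = b̄`, `τ = t(b)`, `ν = n(b)`. Then `b = τ - c`,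
so `c² = τ c - ν`, and left alternativity `c (c a) = c² a` reads `ν = τ b - ν a`. Hence
`a = (τ/ν) b - 1`, and expanding `n(s b - 1) = s² ν - s τ + 1` at `s = τ/ν` gives `n(a) = 1`.
-/

namespace ConjAlg

variable {k : Type*} [Field k] {K : Type*} [AddCommGroup K] [Module k K] (A : ConjAlg k K)

theorem smul_one_mul (c : k) (y : K) : A.mul (c • A.one) y = c • y := by
  rw [A.smul_mul, A.one_mul]

theorem mul_smul_one (c : k) (y : K) : A.mul y (c • A.one) = c • y := by
  rw [A.mul_smul, A.mul_one]

theorem exists_conj_mul_eq_self_of_n_eq_one (hwr : A.WeakRightDistrib)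
    (him : ∃ b : K, b ≠ 0 ∧ A.t b = 0) {a : K} (hna : A.n a = A.one) :
    ∃ b : K, b ≠ 0 ∧ A.mul (A.conj b) a = b := by
  by_cases h : A.one + a = 0
  · obtain ⟨b, hb0, hbt⟩ := him
    have ha : a = (-1 : k) • A.one := by
      rw [neg_one_smul]; exact (neg_eq_of_add_eq_zero_right h).symm
    have hcb : A.conj b = -b := eq_neg_of_add_eq_zero_right hbt
    exact ⟨b, hb0, by rw [hcb, ha, A.mul_smul_one, neg_one_smul, neg_neg]⟩
  · refine ⟨A.one + a, h, ?_⟩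
    have hconj : A.conj (A.one + a) = (1 : k) • A.one + A.conj a := by
      rw [map_add, A.conj_one, one_smul]
    rw [hconj, hwr, A.smul_one_mul, one_smul, ← n, hna, add_comm]

section Quadratic

variable {A} {b : K} {τ ν : k} (hτ : A.t b = τ • A.one) (hν : A.n b = ν • A.one)
include hτ hν

theorem conj_mul_conj (hwl : A.WeakLeftDistrib) :
    A.mul (A.conj b) (A.conj b) = τ • A.conj b - ν • A.one := by
  have hb : b = τ • A.one + (-1 : k) • A.conj b := by
    rw [neg_one_smul, ← hτ, t]; abel
  have h := hwl τ ((-1 : k) • A.conj b) (A.conj b)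
  rw [← hb, A.mul_smul_one, A.mul_smul, neg_one_smul, ← n, hν] at h
  rw [eq_sub_iff_add_eq, h]
  abel

theorem n_smul_sub_one (hwr : A.WeakRightDistrib) (hwl : A.WeakLeftDistrib) (s : k) :
    A.n (s • b - A.one) = (s ^ 2 * ν - s * τ + 1) • A.one := by
  have hconj : A.conj (s • b - A.one) = (-1 : k) • A.one + s • A.conj b := by
    rw [map_sub, map_smul, A.conj_one, neg_one_smul]; abel
  have hsub : s • b - A.one = (-1 : k) • A.one + s • b := by
    rw [neg_one_smul]; abel
  have hc : A.conj b = τ • A.one - b := by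
    rw [← hτ, t]; abel
  rw [n, hconj, hwr, A.smul_one_mul, A.smul_mul, hsub, hwl, A.mul_smul_one, A.mul_smul, ← n, hν,
    hc]
  match_scalars <;> ring

theorem eq_smul_sub_one_of_conj_mul_eq (hwr : A.WeakRightDistrib) (hwl : A.WeakLeftDistrib)
    (hla : A.LeftAlt) (hν0 : ν ≠ 0) {a : K} (hba : A.mul (A.conj b) a = b) :
    a = (ν⁻¹ * τ) • b - A.one := by
  have halt := hla (A.conj b) a
  have hsq : τ • A.conj b - ν • A.one = (-ν) • A.one + τ • A.conj b := by
    rw [neg_smul]; abel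
  rw [hba, ← n, hν, conj_mul_conj hτ hν hwl, hsq, hwr, A.smul_one_mul, A.smul_mul, hba] at halt
  have hνa : ν • a = τ • b - ν • A.one := by
    rw [eq_sub_iff_add_eq, halt, neg_smul]; abel
  calc a = ν⁻¹ • (ν • a) := (inv_smul_smul₀ hν0 a).symm
    _ = (ν⁻¹ * τ) • b - A.one := by rw [hνa, smul_sub, smul_smul, inv_smul_smul₀ hν0]

end Quadratic

theorem n_eq_one_of_conj_mul_eq_self (hwr : A.WeakRightDistrib) (hwl : A.WeakLeftDistrib)
    (hla : A.LeftAlt) (ht : A.TraceKValued) (hn : A.NormKValued) (haniso : A.Anisotropic)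
    {a b : K} (hb0 : b ≠ 0) (hba : A.mul (A.conj b) a = b) : A.n a = A.one := by
  obtain ⟨τ, hτ⟩ := ht b
  obtain ⟨ν, hν⟩ := hn b
  have hν0 : ν ≠ 0 := by
    rintro rfl
    exact haniso b hb0 (by rw [hν, zero_smul])
  rw [eq_smul_sub_one_of_conj_mul_eq hτ hν hwr hwl hla hν0 hba, n_smul_sub_one hτ hν hwr hwl]
  convert one_smul k A.one using 2
  field_simp
  ring

end ConjAlg

theorem stmt8 {k : Type*} [Field k] {K : Type*} [AddCommGroup K] [Module k K] (A : ConjAlg k K)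
    (hwr : A.WeakRightDistrib) (hwl : A.WeakLeftDistrib) (hla : A.LeftAlt)
    (ht : A.TraceKValued) (hn : A.NormKValued) (haniso : A.Anisotropic)
    (him : ∃ b : K, b ≠ 0 ∧ A.t b = 0) :
    ∀ a : K, A.n a = A.one ↔ ∃ b : K, b ≠ 0 ∧ A.mul (A.conj b) a = b := fun _ =>
  ⟨A.exists_conj_mul_eq_self_of_n_eq_one hwr him,
    fun ⟨_, hb0, hba⟩ => A.n_eq_one_of_conj_mul_eq_self hwr hwl hla ht hn haniso hb0 hba⟩
end
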